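/- Let v, w be vertices of G such that there is at least one path from v to w. Then there exist two shortest paths P and Q from v to w such that V(P) ∩ V(Q) ⊆ Δ(v, w); that is, P and Q intersect only at (v, w)-distance-critical vertices (and the endpoints v, w). -/

import Mathlib

open scoped BigOperators

namespace DSP

variable {V : Type*} [Fintype V] [DecidableEq V]

/-- A path: a nonempty list of distinct vertices in which each consecutive
pair is joined by a directed edge. -/
def IsPath (E : V → V → Prop) (p : List V) : Prop :=
  p ≠ [] ∧ p.Nodup ∧ p.Chain' E

/-- A path from `x` to `y`. -/
def IsPathFrom (E : V → V → Prop) (p : List V) (x y : V) : Prop :=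
  IsPath E p ∧ p.head? = some x ∧ p.getLast? = some y

/-- The (ordered) list of edges of a path. -/
def pathEdges (p : List V) : List (V × V) := p.zip p.tail

/-- The weight of a path: the sum of its edge weights. -/
def pathWeight (ℓ : V → V → ℝ) (p : List V) : ℝ :=
  ((pathEdges p).map fun e => ℓ e.1 e.2).sum

/-- `dist x y` : the minimum weight of a path from `x` to `y`
(`⊤` if there is no such path). -/
noncomputable def dist (E : V → V → Prop) (ℓ : V → V → ℝ) (x y : V) : EReal :=
  sInf {w : EReal | ∃ p : List V, IsPathFrom E p x y ∧ (pathWeight ℓ p : EReal) = w}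

/-- A shortest path from `x` to `y` : a path from `x` to `y` whose weight
equals `dist x y`.  `Π(x, y)` is the set of all such paths. -/
def IsShortestPath (E : V → V → Prop) (ℓ : V → V → ℝ) (p : List V) (x y : V) : Prop :=
  IsPathFrom E p x y ∧ (pathWeight ℓ p : EReal) = dist E ℓ x y

/-- A directed cycle: a closed walk with at least one edge whose internal
vertices are pairwise distinct. -/
def IsCycle (E : V → V → Prop) (p : List V) : Prop :=
  2 ≤ p.length ∧ p.Chain' E ∧ p.head? = p.getLast? ∧ p.tail.Nodup

/-- `G` contains no directed cycle of negative or zero total weight. -/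
def NoNonposCycle (E : V → V → Prop) (ℓ : V → V → ℝ) : Prop :=
  ∀ p : List V, IsCycle E p → 0 < pathWeight ℓ p

/-- `G` is a DAG: it contains no directed cycle. -/
def Acyclic (E : V → V → Prop) : Prop :=
  ∀ p : List V, ¬ IsCycle E p

/-- `x` precedes `y` on the path `p` (`x = y` allowed). -/
def Precedes (p : List V) (x y : V) : Prop :=
  x ∈ p ∧ y ∈ p ∧ p.idxOf x ≤ p.idxOf y

/-- `subpath p x y` : the subpath `p[x, y]` of `p` from `x` to `y`
(for `x` preceding `y` on `p`). -/
def subpath (p : List V) (x y : V) : List V :=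
  (p.take (p.idxOf y + 1)).drop (p.idxOf x)

/-- Concatenation `p · q` of two paths (the last vertex of `p` coinciding
with the first vertex of `q`). -/
def pathConcat (p q : List V) : List V := p ++ q.tail

/-- A vertex is internal to a path if it lies on it and is not an endpoint. -/
def Internal (p : List V) (v : V) : Prop :=
  v ∈ p ∧ p.head? ≠ some v ∧ p.getLast? ≠ some v

/-- Paths `p1` from `x1` to `y1` and `p2` from `x2` to `y2` are internally
vertex-disjoint: they share no vertices except possibly those in
`{x1, y1} ∩ {x2, y2}`. -/
def InternallyDisjoint (p1 : List V) (x1 y1 : V) (p2 : List V) (x2 y2 : V) : Prop :=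
  ∀ u, u ∈ p1 → u ∈ p2 → u ∈ ({x1, y1} ∩ {x2, y2} : Set V)

/-- `(a, b)` is a twin-crossing pair for paths `p1`, `p2`. -/
def TwinCrossingPair (p1 p2 : List V) (a b : V) : Prop :=
  a ≠ b ∧ Precedes p1 a b ∧ Precedes p2 a b ∧ subpath p1 a b ≠ subpath p2 a b

/-- The swap operation `φ_{a,b}(P1, P2)`. -/
def swap (p1 : List V) (x1 y1 : V) (p2 : List V) (x2 y2 : V) (a b : V) :
    List V × List V :=
  (pathConcat (pathConcat (subpath p1 x1 a) (subpath p2 a b)) (subpath p1 b y1),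
   pathConcat (pathConcat (subpath p2 x2 a) (subpath p1 a b)) (subpath p2 b y2))

/-- The graph with vertex `u` deleted. -/
def deleteVertex (E : V → V → Prop) (u : V) : V → V → Prop :=
  fun a b => E a b ∧ a ≠ u ∧ b ≠ u

/-- `u` is distance-critical for `(x, y)` : deleting `u` strictly increases
the distance from `x` to `y`. -/
def DistCritical (E : V → V → Prop) (ℓ : V → V → ℝ) (x y u : V) : Prop :=
  dist E ℓ x y < dist (deleteVertex E u) ℓ x y

/-- `Δ(x, y)` : the distance-critical vertices for `(x, y)` together with the
endpoints `x`, `y`. -/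
def Delta (E : V → V → Prop) (ℓ : V → V → ℝ) (x y : V) : Set V :=
  {u | DistCritical E ℓ x y u} ∪ {x, y}

/-- `δ(x, y) = |Δ(x, y)|`. -/
noncomputable def deltaCard (E : V → V → Prop) (ℓ : V → V → ℝ) (x y : V) : ℕ :=
  (Delta E ℓ x y).ncard

/-- `(a, b)` is a concordant pair for paths `p1` (from `x1` to `y1`) and
`p2` (from `x2` to `y2`). -/
def ConcordantPair (p1 : List V) (x1 y1 : V) (p2 : List V) (x2 y2 : V) (a b : V) : Prop :=
  a ∉ ({x1, y1} ∩ {x2, y2} : Set V) ∧ b ∉ ({x1, y1} ∩ {x2, y2} : Set V) ∧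
  Precedes p1 a b ∧ Precedes p2 a b ∧
  InternallyDisjoint (subpath p1 x1 a) x1 a (subpath p2 x2 a) x2 a ∧
  InternallyDisjoint (subpath p1 b y1) b y1 (subpath p2 b y2) b y2

/-- `𝒞(P1, P2)` : the set of concordant pairs for `(P1, P2)`. -/
def concordantSet (p1 : List V) (x1 y1 : V) (p2 : List V) (x2 y2 : V) : Set (V × V) :=
  {c | ConcordantPair p1 x1 y1 p2 x2 y2 c.1 c.2}

/-- The interaction complexity `γ(P1, P2) = Σ_{(v,w) ∈ 𝒞(P1,P2)} δ(v, w)`. -/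
noncomputable def gamma (E : V → V → Prop) (ℓ : V → V → ℝ)
    (p1 : List V) (x1 y1 : V) (p2 : List V) (x2 y2 : V) : ℕ :=
  ∑ᶠ c ∈ concordantSet p1 x1 y1 p2 x2 y2, deltaCard E ℓ c.1 c.2

/-- `E(x, y)` : the set of edges lying on at least one shortest path
from `x` to `y`. -/
def shortestEdges (E : V → V → Prop) (ℓ : V → V → ℝ) (x y : V) : Set (V × V) :=
  {e | ∃ p : List V, IsShortestPath E ℓ p x y ∧ e ∈ pathEdges p}

section Poly

variable (F : Type*) [Field F] [CharP F 2]

/-- The monomial `f(P) = ∏_{e ∈ E(P)} z_e` of a path. -/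
noncomputable def pathMon (p : List V) : MvPolynomial (V × V) F :=
  ((pathEdges p).map fun e => MvPolynomial.X e).prod

/-- The enumerating polynomial of a collection of paths. -/
noncomputable def enumPoly (S : Set (List V)) : MvPolynomial (V × V) F :=
  ∑ᶠ p ∈ S, pathMon F p

/-- The enumerating polynomial of a collection of pairs of paths. -/
noncomputable def enumPoly2 (S : Set (List V × List V)) : MvPolynomial (V × V) F :=
  ∑ᶠ q ∈ S, pathMon F q.1 * pathMon F q.2

variable (E : V → V → Prop) (ℓ : V → V → ℝ)

/-- `F(x, y)` : the enumerating polynomial of `Π(x, y)`. -/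
noncomputable def Fpoly (x y : V) : MvPolynomial (V × V) F :=
  enumPoly F {p : List V | IsShortestPath E ℓ p x y}

end Poly

variable (E : V → V → Prop) (ℓ : V → V → ℝ)

/-- The collection of internally vertex-disjoint pairs
`(P1, P2) ∈ Π(x1, y1) × Π(x2, y2)`. -/
def disjPairs (x1 y1 x2 y2 : V) : Set (List V × List V) :=
  {q | IsShortestPath E ℓ q.1 x1 y1 ∧ IsShortestPath E ℓ q.2 x2 y2 ∧
       InternallyDisjoint q.1 x1 y1 q.2 x2 y2}

/-- Pairs `(P1, P2) ∈ Π(x1, y1) × Π(x2, y2)` such that `v ∈ V(P1) ∩ V(P2)`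
and the prefix `P1[x1, v]` and the suffix `P2[v, y2]` are internally
vertex-disjoint (defining `H_v`). -/
def HvPairs (v x1 y1 x2 y2 : V) : Set (List V × List V) :=
  {q | IsShortestPath E ℓ q.1 x1 y1 ∧ IsShortestPath E ℓ q.2 x2 y2 ∧
       v ∈ q.1 ∧ v ∈ q.2 ∧
       InternallyDisjoint (subpath q.1 x1 v) x1 v (subpath q.2 v y2) v y2}

/-- Pairs `(P1, P2) ∈ Π(x1, y1) × Π(x2, y2)` such that
`(a, v) ∈ E(P1) ∩ E(P2)` and the prefix `P1[x1, a]` and the suffix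
`P2[v, y2]` are internally vertex-disjoint (defining `H_{av}`). -/
def HavPairs (a v x1 y1 x2 y2 : V) : Set (List V × List V) :=
  {q | IsShortestPath E ℓ q.1 x1 y1 ∧ IsShortestPath E ℓ q.2 x2 y2 ∧
       (a, v) ∈ pathEdges q.1 ∧ (a, v) ∈ pathEdges q.2 ∧
       InternallyDisjoint (subpath q.1 x1 a) x1 a (subpath q.2 v y2) v y2}

/-- Pairs `(P1, P2) ∈ Π(x1, y1) × Π(x2, y2)` such that `v ∈ V(P1) ∩ V(P2)`
and the prefix `P1[x1, v]` is internally vertex-disjoint from both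
`P2[x2, v]` and `P2[v, y2]` (defining `D_v`). -/
def DvPairs (v x1 y1 x2 y2 : V) : Set (List V × List V) :=
  {q | IsShortestPath E ℓ q.1 x1 y1 ∧ IsShortestPath E ℓ q.2 x2 y2 ∧
       v ∈ q.1 ∧ v ∈ q.2 ∧
       InternallyDisjoint (subpath q.1 x1 v) x1 v (subpath q.2 x2 v) x2 v ∧
       InternallyDisjoint (subpath q.1 x1 v) x1 v (subpath q.2 v y2) v y2}

/-- Pairs `(P1, P2) ∈ Π(x1, y1) × Π(x2, y2)` with interaction complexity
`γ(P1, P2) ≤ k` (defining `F_{disj,k}`). -/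
def disjkPairs (k : ℤ) (x1 y1 x2 y2 : V) : Set (List V × List V) :=
  {q | IsShortestPath E ℓ q.1 x1 y1 ∧ IsShortestPath E ℓ q.2 x2 y2 ∧
       (gamma E ℓ q.1 x1 y1 q.2 x2 y2 : ℤ) ≤ k}

/-- Pairs `(P1, P2) ∈ Π(x1, y1) × Π(x2, y2)` with `γ(P1, P2) ≤ k` such that
`(v, w) ∈ 𝒞(P1, P2)` and `(v, w)` is the concordant pair appearing first
along `P1` (defining `D_{v,w,k}`). -/
def DvwkPairs (k : ℤ) (v w x1 y1 x2 y2 : V) : Set (List V × List V) :=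
  {q | IsShortestPath E ℓ q.1 x1 y1 ∧ IsShortestPath E ℓ q.2 x2 y2 ∧
       (gamma E ℓ q.1 x1 y1 q.2 x2 y2 : ℤ) ≤ k ∧
       (v, w) ∈ concordantSet q.1 x1 y1 q.2 x2 y2 ∧
       ∀ c ∈ concordantSet q.1 x1 y1 q.2 x2 y2, q.1.idxOf v ≤ q.1.idxOf c.1}

/-- Pairs `(P1, P2) ∈ Π(x1, y1) × Π(x2, y2)` such that `v` and `w` lie on
both paths with `v` preceding `w` on both, the subpaths `P1[x1, v]` and
`P2[w, y2]` are internally vertex-disjoint, and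
`γ(P1[v, y1], P2[x2, w]) ≤ k` (defining `H_{v,w,k}`). -/
def HvwkPairs (k : ℤ) (v w x1 y1 x2 y2 : V) : Set (List V × List V) :=
  {q | IsShortestPath E ℓ q.1 x1 y1 ∧ IsShortestPath E ℓ q.2 x2 y2 ∧
       Precedes q.1 v w ∧ Precedes q.2 v w ∧
       InternallyDisjoint (subpath q.1 x1 v) x1 v (subpath q.2 w y2) w y2 ∧
       (gamma E ℓ (subpath q.1 v y1) v y1 (subpath q.2 x2 w) x2 w : ℤ) ≤ k}

/-- As `HvwkPairs`, additionally requiring the edge `(a, v)` on both paths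
(disjointness imposed on `P1[x1, a]` and `P2[w, y2]`), defining `H_{av,w,k}`. -/
def HavwkPairs (k : ℤ) (a v w x1 y1 x2 y2 : V) : Set (List V × List V) :=
  {q | IsShortestPath E ℓ q.1 x1 y1 ∧ IsShortestPath E ℓ q.2 x2 y2 ∧
       Precedes q.1 v w ∧ Precedes q.2 v w ∧
       (a, v) ∈ pathEdges q.1 ∧ (a, v) ∈ pathEdges q.2 ∧
       InternallyDisjoint (subpath q.1 x1 a) x1 a (subpath q.2 w y2) w y2 ∧
       (gamma E ℓ (subpath q.1 v y1) v y1 (subpath q.2 x2 w) x2 w : ℤ) ≤ k}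

/-- As `HvwkPairs`, additionally requiring the edge `(w, b)` on both paths
(disjointness imposed on `P1[x1, v]` and `P2[b, y2]`), defining `H_{v,wb,k}`. -/
def HvwbkPairs (k : ℤ) (v w b x1 y1 x2 y2 : V) : Set (List V × List V) :=
  {q | IsShortestPath E ℓ q.1 x1 y1 ∧ IsShortestPath E ℓ q.2 x2 y2 ∧
       Precedes q.1 v w ∧ Precedes q.2 v w ∧
       (w, b) ∈ pathEdges q.1 ∧ (w, b) ∈ pathEdges q.2 ∧
       InternallyDisjoint (subpath q.1 x1 v) x1 v (subpath q.2 b y2) b y2 ∧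
       (gamma E ℓ (subpath q.1 v y1) v y1 (subpath q.2 x2 w) x2 w : ℤ) ≤ k}

/-- As `HvwkPairs`, additionally requiring both edges `(a, v)` and `(w, b)`
on both paths (disjointness imposed on `P1[x1, a]` and `P2[b, y2]`),
defining `H_{av,wb,k}`. -/
def HavwbkPairs (k : ℤ) (a v w b x1 y1 x2 y2 : V) : Set (List V × List V) :=
  {q | IsShortestPath E ℓ q.1 x1 y1 ∧ IsShortestPath E ℓ q.2 x2 y2 ∧
       Precedes q.1 v w ∧ Precedes q.2 v w ∧
       (a, v) ∈ pathEdges q.1 ∧ (a, v) ∈ pathEdges q.2 ∧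
       (w, b) ∈ pathEdges q.1 ∧ (w, b) ∈ pathEdges q.2 ∧
       InternallyDisjoint (subpath q.1 x1 a) x1 a (subpath q.2 b y2) b y2 ∧
       (gamma E ℓ (subpath q.1 v y1) v y1 (subpath q.2 x2 w) x2 w : ℤ) ≤ k}

/-!
The edges lying on shortest `v`–`w` paths form a DAG: `dist E ℓ v` grows by `ℓ a b` along each
such edge `(a, b)`, so a closed walk in it would have weight zero, against the cycle hypothesis.
For the same reason every `v`–`w` walk in this DAG is a shortest path. Take two shortest paths
`P`, `Q` with as few common vertices as possible, and suppose a common vertex `u` is not critical,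
so that some shortest path `R` avoids `u`. Rank the vertices by their number of predecessors in
the DAG; let `x` be the last vertex of `R` on `P ∪ Q` ranked below `u`, and `y` the first one
ranked above `u`. Rerouting through `R[x, y]`, and exchanging the tails of `P` and `Q` at `u` when
`x` and `y` lie on different paths, gives two shortest paths whose common vertices are those of
`P` and `Q` except `u`.
-/

theorem _root_.List.exists_eq_append_cons_append_cons_of_not_nodup {α : Type*} :
    ∀ {l : List α}, ¬ l.Nodup → ∃ b s m r, l = s ++ b :: (m ++ b :: r)
  | [], h => absurd List.nodup_nil h
  | a :: t, h => by
    by_cases ha : a ∈ t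
    · obtain ⟨m, r, rfl⟩ := List.append_of_mem ha
      exact ⟨a, [], m, r, rfl⟩
    · obtain ⟨b, s, m, r, rfl⟩ := List.exists_eq_append_cons_append_cons_of_not_nodup
        fun ht => h (List.nodup_cons.2 ⟨ha, ht⟩)
      exact ⟨b, a :: s, m, r, rfl⟩

theorem _root_.List.IsChain.of_append_cons_append_cons {α : Type*} {R : α → α → Prop}
    {s m r : List α} {b : α} (h : (s ++ b :: (m ++ b :: r)).IsChain R) :
    (s ++ b :: r).IsChain R ∧ (b :: (m ++ [b])).IsChain R := by
  obtain ⟨hs, hbr⟩ := List.isChain_split.1 h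
  obtain ⟨hloop, hr⟩ := (List.isChain_split (l₁ := b :: m)).1 hbr
  exact ⟨List.isChain_split.2 ⟨hs, hr⟩, hloop⟩

theorem _root_.List.Pairwise.exists_infix {α β : Type*} [Preorder β] {f : α → β}
    {l : List α} (hl : l.Pairwise (f · < f ·)) {x y : α} (hx : x ∈ l) (hy : y ∈ l)
    (hxy : f x < f y) :
    ∃ M, x :: (M ++ [y]) <:+: l ∧ ∀ z ∈ M, f x < f z ∧ f z < f y := by
  obtain ⟨S, T, rfl⟩ := List.append_of_mem hx
  obtain ⟨-, hxT, hSx⟩ := List.pairwise_append.1 hl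
  have hyT : y ∈ T := by
    rcases List.mem_append.1 hy with hyS | hyxT
    · exact absurd (hSx y hyS x List.mem_cons_self) (lt_asymm hxy)
    · exact (List.mem_cons.1 hyxT).resolve_left (by rintro rfl; exact lt_irrefl _ hxy)
  obtain ⟨M, T', rfl⟩ := List.append_of_mem hyT
  refine ⟨M, ⟨S, T', by simp⟩, fun z hz => ⟨?_, ?_⟩⟩
  · exact List.rel_of_pairwise_cons hxT (by simp [hz])
  · exact (List.pairwise_append.1 (List.pairwise_cons.1 hxT).2).2.2 z hz y List.mem_cons_self

theorem _root_.List.IsChain.pairwise_comp_lt {α : Type*} {R : α → α → Prop} {f : α → ℕ}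
    (hf : ∀ ⦃a b⦄, R a b → f a < f b) {l : List α} (hl : l.IsChain R) :
    l.Pairwise (f · < f ·) :=
  List.pairwise_map.1 (List.isChain_iff_pairwise.1 ((List.isChain_map f).2 (hl.imp hf)))

theorem _root_.List.Pairwise.inj_on_of_comp_lt {α : Type*} {f : α → ℕ} {l : List α}
    (hl : l.Pairwise (f · < f ·)) : ∀ ⦃x⦄, x ∈ l → ∀ ⦃y⦄, y ∈ l → f x = f y → x = y :=
  List.inj_on_of_nodup_map (List.pairwise_map.2 (hl.imp ne_of_lt))

noncomputable def numPred {α : Type*} (R : α → α → Prop) (z : α) : ℕ :=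
  {y | Relation.TransGen R y z}.ncard

theorem numPred_lt_numPred {α : Type*} [Finite α] {R : α → α → Prop}
    (hR : ∀ u, ¬ Relation.TransGen R u u) {a b : α} (h : R a b) : numPred R a < numPred R b := by
  refine Set.ncard_lt_ncard ⟨fun y hy => hy.tail h, fun hsub => hR a (hsub ?_)⟩ (Set.toFinite _)
  exact Relation.TransGen.single h

section
omit [Fintype V] [DecidableEq V]

def ShortestEdge (v w a b : V) : Prop := (a, b) ∈ shortestEdges E ℓ v w

variable {E ℓ}

@[simp]
theorem pathWeight_cons_cons (a b : V) (t : List V) :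
    pathWeight ℓ (a :: b :: t) = ℓ a b + pathWeight ℓ (b :: t) := by
  simp [pathWeight, pathEdges]

@[simp]
theorem pathWeight_singleton (a : V) : pathWeight ℓ [a] = 0 := by
  simp [pathWeight, pathEdges]

theorem pathWeight_append_cons (s : List V) (a : V) (t : List V) :
    pathWeight ℓ (s ++ a :: t) = pathWeight ℓ (s ++ [a]) + pathWeight ℓ (a :: t) := by
  induction s with
  | nil => simp
  | cons x s ih => rcases s with _ | ⟨y, s⟩ <;> simp_all [add_assoc]

theorem pathWeight_append_cons_append_cons (s m r : List V) (b : V) :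
    pathWeight ℓ (s ++ b :: (m ++ b :: r)) =
      pathWeight ℓ (s ++ b :: r) + pathWeight ℓ (b :: (m ++ [b])) := by
  have hloop := pathWeight_append_cons (ℓ := ℓ) (b :: m) b r
  simp only [List.cons_append] at hloop
  rw [pathWeight_append_cons, hloop, pathWeight_append_cons s b r]
  ring

@[simp]
theorem pathEdges_cons_cons (a b : V) (t : List V) :
    pathEdges (a :: b :: t) = (a, b) :: pathEdges (b :: t) :=
  rfl

theorem isChain_iff_forall_mem_pathEdges {R : V → V → Prop} :
    ∀ {p : List V}, p.IsChain R ↔ ∀ a b, (a, b) ∈ pathEdges p → R a b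
  | [] | [_] => by simp [pathEdges]
  | a :: b :: t => by
    rw [List.isChain_cons_cons, isChain_iff_forall_mem_pathEdges]
    simp [or_imp, forall_and]

theorem exists_eq_append_of_mem_pathEdges {a b : V} :
    ∀ {p : List V}, (a, b) ∈ pathEdges p → ∃ s t, p = s ++ a :: b :: t
  | [], h | [_], h => by simp [pathEdges] at h
  | c :: d :: t, h => by
    rcases List.mem_cons.1 h with h | h
    · obtain ⟨rfl, rfl⟩ := Prod.mk.inj h
      exact ⟨[], t, rfl⟩
    · obtain ⟨s, t', hst⟩ := exists_eq_append_of_mem_pathEdges h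
      exact ⟨c :: s, t', by rw [hst]; rfl⟩

theorem NoNonposCycle.pathWeight_pos (hG : NoNonposCycle E ℓ) {p : List V}
    (hp : p.IsChain E) (hlen : 2 ≤ p.length) (hclosed : p.head? = p.getLast?) :
    0 < pathWeight ℓ p := by
  induction hn : p.length using Nat.strong_induction_on generalizing p with
  | _ n ih =>
  obtain ⟨a, t, rfl⟩ := List.exists_cons_of_length_pos (by omega : 0 < p.length)
  by_cases ht : t.Nodup
  · exact hG _ ⟨hlen, hp, hclosed, ht⟩
  obtain ⟨b, s, m, r, rfl⟩ := List.exists_eq_append_cons_append_cons_of_not_nodup ht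
  obtain ⟨hshort, hloop⟩ := List.IsChain.of_append_cons_append_cons (s := a :: s) hp
  have hshort_pos : 0 < pathWeight ℓ (a :: s ++ b :: r) :=
    ih _ (by simp at hn ⊢; omega) hshort (by simp; omega)
      (by simpa [List.getLast?_cons] using hclosed) rfl
  have hloop_pos : 0 < pathWeight ℓ (b :: (m ++ [b])) :=
    ih _ (by simp at hn ⊢; omega) hloop (by simp) (by simp [List.getLast?_cons]) rfl
  rw [← List.cons_append, pathWeight_append_cons_append_cons]
  linarith

theorem dist_le_pathWeight {p : List V} {x y : V} (hp : IsPathFrom E p x y) :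
    dist E ℓ x y ≤ pathWeight ℓ p :=
  sInf_le ⟨p, hp, rfl⟩

theorem NoNonposCycle.dist_le_pathWeight_of_isChain (hG : NoNonposCycle E ℓ) {p : List V}
    {x y : V} (hp : p.IsChain E) (hne : p ≠ []) (hx : p.head? = some x)
    (hy : p.getLast? = some y) : dist E ℓ x y ≤ pathWeight ℓ p := by
  induction hn : p.length using Nat.strong_induction_on generalizing p with
  | _ n ih =>
  by_cases hnd : p.Nodup
  · exact dist_le_pathWeight ⟨⟨hne, hnd, hp⟩, hx, hy⟩
  obtain ⟨b, s, m, r, rfl⟩ := List.exists_eq_append_cons_append_cons_of_not_nodup hnd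
  obtain ⟨hshort, hloop⟩ := hp.of_append_cons_append_cons
  have hloop_pos := hG.pathWeight_pos hloop (by simp) (by simp [List.getLast?_cons])
  calc dist E ℓ x y ≤ pathWeight ℓ (s ++ b :: r) :=
        ih _ (by simp at hn ⊢; omega) hshort (by simp) (by simpa [List.head?_append] using hx)
          (by simpa [List.getLast?_cons] using hy) rfl
    _ ≤ _ := by
        rw [pathWeight_append_cons_append_cons]
        exact EReal.coe_le_coe_iff.2 (by linarith)

theorem exists_isShortestPath [Finite V] {x y : V} (h : ∃ p, IsPathFrom E p x y) :
    ∃ p, IsShortestPath E ℓ p x y := by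
  obtain ⟨p, hp⟩ := h
  have := Fintype.ofFinite V
  let S := {d : EReal | ∃ p, IsPathFrom E p x y ∧ (pathWeight ℓ p : EReal) = d}
  have hfin : S.Finite :=
    ((List.finite_length_le V (Fintype.card V)).image fun p => (pathWeight ℓ p : EReal)).subset
      (by rintro _ ⟨p, hp, rfl⟩; exact ⟨p, hp.1.2.1.length_le_card, rfl⟩)
  have hne : S.Nonempty := ⟨_, p, hp, rfl⟩
  obtain ⟨q, hq, hw⟩ := hne.csInf_mem hfin
  exact ⟨q, hq, hw⟩

theorem IsPathFrom.eq_singleton {p : List V} {x : V} (hp : IsPathFrom E p x x) : p = [x] := by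
  obtain ⟨⟨hne, hnd, -⟩, hx, hx'⟩ := hp
  obtain ⟨a, t, rfl⟩ := List.exists_cons_of_ne_nil hne
  obtain rfl : a = x := by simpa using hx
  rcases t with _ | ⟨c, t⟩
  · rfl
  · exact absurd (List.mem_of_getLast? (by simpa using hx')) (List.nodup_cons.1 hnd).1

theorem dist_self_eq_zero (x : V) : dist E ℓ x x = 0 := by
  have hx : IsPathFrom E [x] x x := ⟨⟨by simp, by simp, List.isChain_singleton x⟩, rfl, rfl⟩
  have h0 : (pathWeight ℓ [x] : EReal) = 0 := by simp
  refine le_antisymm (h0 ▸ dist_le_pathWeight hx) (le_sInf ?_)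
  rintro _ ⟨p, hp, rfl⟩
  rw [hp.eq_singleton, h0]

theorem NoNonposCycle.dist_eq_pathWeight_prefix (hG : NoNonposCycle E ℓ) {s t : List V}
    {v w z : V} (hA : IsShortestPath E ℓ (s ++ z :: t) v w) :
    dist E ℓ v z = pathWeight ℓ (s ++ [z]) := by
  obtain ⟨⟨⟨-, hnd, hc⟩, hv, hw⟩, hweight⟩ := hA
  obtain ⟨hcs, hct⟩ := List.isChain_split.1 hc
  have hprefix : IsPathFrom E (s ++ [z]) v z :=
    ⟨⟨by simp, hnd.sublist (by simp), hcs⟩, by simpa [List.head?_append] using hv, by simp⟩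
  refine le_antisymm (dist_le_pathWeight hprefix) (le_sInf ?_)
  rintro _ ⟨q, hq, rfl⟩
  obtain ⟨q', rfl⟩ := List.getLast?_eq_some_iff.1 hq.2.2
  have hwalk := hG.dist_le_pathWeight_of_isChain (p := q' ++ z :: t)
    (List.isChain_split.2 ⟨hq.1.2.2, hct⟩) (by simp)
    (by simpa [List.head?_append] using hq.2.1) (by simpa [List.getLast?_cons] using hw)
  rw [← hweight, pathWeight_append_cons, pathWeight_append_cons q'] at hwalk
  exact EReal.coe_le_coe_iff.2 (by linarith [EReal.coe_le_coe_iff.1 hwalk])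

theorem IsShortestPath.isChain_shortestEdge {A : List V} {v w : V}
    (hA : IsShortestPath E ℓ A v w) : A.IsChain (ShortestEdge E ℓ v w) :=
  isChain_iff_forall_mem_pathEdges.2 fun _ _ h => ⟨A, hA, h⟩

theorem ShortestEdge.edge {v w a b : V} (h : ShortestEdge E ℓ v w a b) : E a b := by
  obtain ⟨p, hp, hab⟩ := h
  exact isChain_iff_forall_mem_pathEdges.1 hp.1.1.2.2 a b hab

theorem NoNonposCycle.dist_eq_of_shortestEdge (hG : NoNonposCycle E ℓ) {v w a b : V}
    (h : ShortestEdge E ℓ v w a b) :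
    ∃ r : ℝ, dist E ℓ v a = r ∧ dist E ℓ v b = (r + ℓ a b : ℝ) := by
  obtain ⟨p, hp, hab⟩ := h
  obtain ⟨s, t, rfl⟩ := exists_eq_append_of_mem_pathEdges hab
  refine ⟨pathWeight ℓ (s ++ [a]), hG.dist_eq_pathWeight_prefix hp, ?_⟩
  rw [hG.dist_eq_pathWeight_prefix (s := s ++ [a]) (by simpa using hp), List.append_assoc,
    List.singleton_append, pathWeight_append_cons s a [b]]
  simp

theorem NoNonposCycle.dist_eq_add_pathWeight (hG : NoNonposCycle E ℓ) {v w a b : V}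
    {l : List V} {r : ℝ} (hl : (a :: l).IsChain (ShortestEdge E ℓ v w))
    (hb : (a :: l).getLast? = some b) (ha : dist E ℓ v a = r) :
    dist E ℓ v b = (r + pathWeight ℓ (a :: l) : ℝ) := by
  induction l generalizing a r with
  | nil =>
    obtain rfl : a = b := by simpa using hb
    simpa using ha
  | cons c l ih =>
    obtain ⟨hac, hl⟩ := List.isChain_cons_cons.1 hl
    obtain ⟨r', hr', hc⟩ := hG.dist_eq_of_shortestEdge hac
    obtain rfl : r = r' := by rw [ha] at hr'; exact_mod_cast hr'
    rw [ih hl (by simpa using hb) hc, pathWeight_cons_cons, add_assoc]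

theorem NoNonposCycle.not_transGen_shortestEdge (hG : NoNonposCycle E ℓ) {v w : V} (u : V) :
    ¬ Relation.TransGen (ShortestEdge E ℓ v w) u u := by
  intro h
  obtain ⟨c, huc, hcu⟩ := Relation.TransGen.head'_iff.1 h
  obtain ⟨l, hl, hlast⟩ := List.exists_isChain_cons_of_relationReflTransGen hcu
  have hwalk : (u :: c :: l).IsChain (ShortestEdge E ℓ v w) := List.isChain_cons_cons.2 ⟨huc, hl⟩
  have hclosed : (u :: c :: l).getLast? = some u := by
    rw [List.getLast?_cons_cons, List.getLast?_eq_some_getLast (List.cons_ne_nil c l), hlast]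
  obtain ⟨r, hr, -⟩ := hG.dist_eq_of_shortestEdge huc
  have htel := hG.dist_eq_add_pathWeight hwalk hclosed hr
  rw [hr, EReal.coe_eq_coe_iff] at htel
  have hpos := hG.pathWeight_pos (hwalk.imp fun _ _ h => h.edge) (by simp)
    (by rw [hclosed]; rfl)
  linarith

theorem not_mem_of_isChain_deleteVertex {u a : V} {l : List V}
    (hl : (a :: l).IsChain (deleteVertex E u)) (ha : a ≠ u) : u ∉ a :: l := by
  induction l generalizing a with
  | nil => simpa using ha.symm
  | cons c l ih =>
    obtain ⟨hac, hl⟩ := List.isChain_cons_cons.1 hl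
    simpa [List.mem_cons, ha.symm] using ih hl hac.2.2

theorem exists_isShortestPath_not_mem [Finite V] {v w u : V}
    (hreach : ∃ p, IsPathFrom E p v w) (hu : u ∉ Delta E ℓ v w) :
    ∃ R, IsShortestPath E ℓ R v w ∧ u ∉ R := by
  have hvu : v ≠ u := by rintro rfl; exact hu (Or.inr (Set.mem_insert _ _))
  have hsub : ∀ {p}, IsPathFrom (deleteVertex E u) p v w → IsPathFrom E p v w :=
    fun hp => ⟨⟨hp.1.1, hp.1.2.1, hp.1.2.2.imp fun _ _ h => h.1⟩, hp.2⟩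
  have heq : dist (deleteVertex E u) ℓ v w = dist E ℓ v w :=
    le_antisymm (not_lt.1 fun h => hu (Or.inl h))
      (sInf_le_sInf fun _ ⟨p, hp, hpw⟩ => ⟨p, hsub hp, hpw⟩)
  obtain ⟨P, hP⟩ := exists_isShortestPath (ℓ := ℓ) hreach
  obtain ⟨R, hR⟩ : ∃ R, IsShortestPath (deleteVertex E u) ℓ R v w := by
    refine exists_isShortestPath
      (not_forall_not.1 fun hnone => EReal.coe_ne_top (pathWeight ℓ P) ?_)
    rw [hP.2, ← heq, dist, sInf_eq_top]
    rintro _ ⟨p, hp, -⟩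
    exact absurd hp (hnone p)
  refine ⟨R, ⟨hsub hR.1, hR.2.trans heq⟩, ?_⟩
  obtain ⟨a, l, rfl⟩ := List.exists_cons_of_ne_nil hR.1.1.1
  obtain rfl : a = v := by simpa using hR.1.2.1
  exact not_mem_of_isChain_deleteVertex hR.1.1.2.2 hvu

section Rank

-- `f` ranks the DAG of shortest-path edges; `dist E ℓ v` does not, as edge weights may be `≤ 0`.
variable {v w : V} {f : V → ℕ} (hf : ∀ ⦃a b⦄, ShortestEdge E ℓ v w a b → f a < f b)
include hf

theorem NoNonposCycle.isShortestPath_of_isChain (hG : NoNonposCycle E ℓ) {p : List V}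
    (hp : p.IsChain (ShortestEdge E ℓ v w)) (hne : p ≠ []) (hv : p.head? = some v)
    (hw : p.getLast? = some w) : IsShortestPath E ℓ p v w := by
  obtain ⟨a, l, rfl⟩ := List.exists_cons_of_ne_nil hne
  obtain rfl : a = v := by simpa using hv
  have hnd : (a :: l).Nodup := (hp.pairwise_comp_lt hf).imp fun h hab => (hab ▸ h).false
  refine ⟨⟨⟨hne, hnd, hp.imp fun _ _ h => h.edge⟩, hv, hw⟩, ?_⟩
  rw [hG.dist_eq_add_pathWeight hp hw ((dist_self_eq_zero a).trans EReal.coe_zero.symm),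
    zero_add]

theorem IsShortestPath.pairwise_lt {A : List V} (hA : IsShortestPath E ℓ A v w) :
    A.Pairwise (f · < f ·) :=
  hA.isChain_shortestEdge.pairwise_comp_lt hf

theorem IsShortestPath.lt_of_ne_source {A : List V} {u : V} (hA : IsShortestPath E ℓ A v w)
    (hu : u ∈ A) (huv : u ≠ v) : f v < f u := by
  obtain ⟨a, t, rfl⟩ := List.exists_cons_of_ne_nil hA.1.1.1
  obtain rfl : a = v := by simpa using hA.1.2.1
  exact List.rel_of_pairwise_cons (hA.pairwise_lt hf) ((List.mem_cons.1 hu).resolve_left huv)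

theorem IsShortestPath.lt_of_ne_target {A : List V} {u : V} (hA : IsShortestPath E ℓ A v w)
    (hu : u ∈ A) (huw : u ≠ w) : f u < f w := by
  obtain ⟨t, rfl⟩ := List.getLast?_eq_some_iff.1 hA.1.2.2
  have hut : u ∈ t := by simpa [huw] using hu
  exact (List.pairwise_append.1 (hA.pairwise_lt hf)).2.2 u hut w List.mem_cons_self

theorem NoNonposCycle.exists_isShortestPath_splice (hG : NoNonposCycle E ℓ) {A C L : List V}
    {x y : V} (hA : IsShortestPath E ℓ A v w) (hC : IsShortestPath E ℓ C v w) (hx : x ∈ A)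
    (hy : y ∈ C) (hL : (x :: L).IsChain (ShortestEdge E ℓ v w))
    (hLy : (x :: L).getLast? = some y) :
    ∃ P, IsShortestPath E ℓ P v w ∧
      ∀ z ∈ P, (z ∈ A ∧ f z < f x) ∨ z ∈ x :: L ∨ (z ∈ C ∧ f y < f z) := by
  have hApw := hA.pairwise_lt hf
  have hCpw := hC.pairwise_lt hf
  obtain ⟨S, T, rfl⟩ := List.append_of_mem hx
  obtain ⟨S', T', rfl⟩ := List.append_of_mem hy
  obtain ⟨K, hK⟩ := List.getLast?_eq_some_iff.1 hLy
  have hPK : S ++ x :: (L ++ T') = S ++ K ++ y :: T' := by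
    rw [← List.cons_append, hK]; simp
  refine ⟨S ++ x :: (L ++ T'), hG.isShortestPath_of_isChain hf ?_ (by simp) ?_ ?_, ?_⟩
  · rw [hPK, List.isChain_split, List.append_assoc, ← hK]
    exact ⟨List.isChain_split.2 ⟨(List.isChain_split.1 hA.isChain_shortestEdge).1, hL⟩,
      (List.isChain_split.1 hC.isChain_shortestEdge).2⟩
  · simpa [List.head?_append] using hA.1.2.1
  · simpa [hPK, List.getLast?_cons] using hC.1.2.2
  · intro z hz
    rcases List.mem_append.1 hz with hzS | hz
    · exact Or.inl ⟨by simp [hzS], (List.pairwise_append.1 hApw).2.2 z hzS x List.mem_cons_self⟩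
    rw [← List.cons_append] at hz
    rcases List.mem_append.1 hz with hzL | hzT
    · exact Or.inr (Or.inl hzL)
    · exact Or.inr (Or.inr ⟨by simp [hzT],
        List.rel_of_pairwise_cons (List.pairwise_append.1 hCpw).2.1 hzT⟩)

theorem exists_detour {A B R : List V} {u : V} (hA : IsShortestPath E ℓ A v w)
    (hB : IsShortestPath E ℓ B v w) (hR : IsShortestPath E ℓ R v w) (huA : u ∈ A) (huB : u ∈ B)
    (huR : u ∉ R) (hvu : f v < f u) (huw : f u < f w) :
    ∃ x y L, (x ∈ A ∨ x ∈ B) ∧ (y ∈ A ∨ y ∈ B) ∧ f x < f u ∧ f u < f y ∧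
      (x :: L).IsChain (ShortestEdge E ℓ v w) ∧ (x :: L).getLast? = some y ∧
      ∀ z ∈ x :: L, z ∈ A ∨ z ∈ B → z = x ∨ z = y := by
  classical
  have hvR : v ∈ R := List.mem_of_head? hR.1.2.1
  have hwR : w ∈ R := List.mem_of_getLast? hR.1.2.2
  have hvA : v ∈ A := List.mem_of_head? hA.1.2.1
  have hwA : w ∈ A := List.mem_of_getLast? hA.1.2.2
  obtain ⟨x, hx, hxmax⟩ := (R.toFinset.filter fun z => (z ∈ A ∨ z ∈ B) ∧ f z < f u)
    |>.exists_max_image f ⟨v, by simp [hvR, hvA, hvu]⟩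
  obtain ⟨y, hy, hymin⟩ := (R.toFinset.filter fun z => (z ∈ A ∨ z ∈ B) ∧ f u < f z)
    |>.exists_min_image f ⟨w, by simp [hwR, hwA, huw]⟩
  simp only [Finset.mem_filter, List.mem_toFinset] at hx hy hxmax hymin
  obtain ⟨M, hMR, hM⟩ := (hR.pairwise_lt hf).exists_infix hx.1 hy.1 (hx.2.2.trans hy.2.2)
  refine ⟨x, y, M ++ [y], hx.2.1, hy.2.1, hx.2.2, hy.2.2, hR.isChain_shortestEdge.infix hMR,
    by simp [List.getLast?_cons], fun z hz hzAB => ?_⟩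
  simp only [List.mem_cons, List.mem_append, List.not_mem_nil, or_false] at hz
  rcases hz with rfl | hzM | rfl
  · exact Or.inl rfl
  · exfalso
    have hzR : z ∈ R := hMR.subset (by simp [hzM])
    obtain ⟨hxz, hzy⟩ := hM z hzM
    rcases lt_trichotomy (f z) (f u) with h | h | h
    · exact (hxmax z ⟨hzR, hzAB, h⟩).not_gt hxz
    · rcases hzAB with hzA | hzB
      · exact huR ((hA.pairwise_lt hf).inj_on_of_comp_lt hzA huA h ▸ hzR)
      · exact huR ((hB.pairwise_lt hf).inj_on_of_comp_lt hzB huB h ▸ hzR)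
    · exact (hymin z ⟨hzR, hzAB, h⟩).not_gt hzy
  · exact Or.inr rfl

theorem NoNonposCycle.exists_isShortestPath_pair_of_detour (hG : NoNonposCycle E ℓ)
    {A B L : List V} {u x y : V} (hA : IsShortestPath E ℓ A v w)
    (hB : IsShortestPath E ℓ B v w) (huA : u ∈ A) (huB : u ∈ B) (hxA : x ∈ A)
    (hy : y ∈ A ∨ y ∈ B) (hxu : f x < f u) (huy : f u < f y)
    (hL : (x :: L).IsChain (ShortestEdge E ℓ v w)) (hLy : (x :: L).getLast? = some y)
    (hLAB : ∀ z ∈ x :: L, z ∈ A ∨ z ∈ B → z = x ∨ z = y) :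
    ∃ P Q, IsShortestPath E ℓ P v w ∧ IsShortestPath E ℓ Q v w ∧
      ∀ z ∈ P, z ∈ Q → z ≠ u ∧ z ∈ A ∧ z ∈ B := by
  rcases hy with hyA | hyB
  · obtain ⟨P, hP, hPmem⟩ := hG.exists_isShortestPath_splice hf hA hA hxA hyA hL hLy
    refine ⟨P, B, hP, hB, fun z hzP hzB => ?_⟩
    rcases hPmem z hzP with ⟨hzA, hz⟩ | hzL | ⟨hzA, hz⟩
    · exact ⟨by rintro rfl; omega, hzA, hzB⟩
    · rcases hLAB z hzL (Or.inr hzB) with rfl | rfl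
      · exact ⟨by rintro rfl; omega, hxA, hzB⟩
      · exact ⟨by rintro rfl; omega, hyA, hzB⟩
    · exact ⟨by rintro rfl; omega, hzA, hzB⟩
  · -- `P` runs along `A` below `u` and along `B` above it, `Q` the other way round
    obtain ⟨P, hP, hPmem⟩ := hG.exists_isShortestPath_splice hf hA hB hxA hyB hL hLy
    obtain ⟨Q, hQ, hQmem⟩ :=
      hG.exists_isShortestPath_splice hf hB hA huB huA (List.isChain_singleton u) rfl
    refine ⟨P, Q, hP, hQ, fun z hzP hzQ => ?_⟩
    have hzQ' : (z ∈ B ∧ f z < f u) ∨ z = u ∨ (z ∈ A ∧ f u < f z) := by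
      simpa using hQmem z hzQ
    have hzP' : (z ∈ A ∧ f z < f u) ∨ (z ∈ B ∧ f u < f z) := by
      rcases hPmem z hzP with ⟨hzA, hz⟩ | hzL | ⟨hzB, hz⟩
      · exact Or.inl ⟨hzA, hz.trans hxu⟩
      · have hzAB : z ∈ A ∨ z ∈ B := by
          rcases hzQ' with h | rfl | h
          exacts [Or.inr h.1, Or.inl huA, Or.inl h.1]
        rcases hLAB z hzL hzAB with rfl | rfl
        exacts [Or.inl ⟨hxA, hxu⟩, Or.inr ⟨hyB, huy⟩]
      · exact Or.inr ⟨hzB, huy.trans hz⟩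
    rcases hzP' with ⟨h₁, h₂⟩ | ⟨h₁, h₂⟩ <;> rcases hzQ' with ⟨h₃, h₄⟩ | rfl | ⟨h₃, h₄⟩ <;>
      first | omega | exact ⟨by rintro rfl; omega, ‹_›, ‹_›⟩

end Rank

theorem NoNonposCycle.exists_isShortestPath_pair_inter_subset [Finite V]
    (hG : NoNonposCycle E ℓ) {P Q : List V} {v w u : V} (hP : IsShortestPath E ℓ P v w)
    (hQ : IsShortestPath E ℓ Q v w) (huP : u ∈ P) (huQ : u ∈ Q) (hu : u ∉ Delta E ℓ v w) :
    ∃ P' Q', IsShortestPath E ℓ P' v w ∧ IsShortestPath E ℓ Q' v w ∧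
      ∀ z ∈ P', z ∈ Q' → z ≠ u ∧ z ∈ P ∧ z ∈ Q := by
  have hf : ∀ ⦃a b⦄, ShortestEdge E ℓ v w a b → numPred (ShortestEdge E ℓ v w) a <
      numPred (ShortestEdge E ℓ v w) b :=
    fun _ _ => numPred_lt_numPred hG.not_transGen_shortestEdge
  have huv : u ≠ v := by rintro rfl; exact hu (Or.inr (Set.mem_insert _ _))
  have huw : u ≠ w := by rintro rfl; exact hu (Or.inr (Set.mem_insert_of_mem _ rfl))
  obtain ⟨R, hR, huR⟩ := exists_isShortestPath_not_mem ⟨P, hP.1⟩ hu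
  obtain ⟨x, y, L, hx, hy, hxu, huy, hL, hLy, hLPQ⟩ := exists_detour hf hP hQ hR huP huQ huR
    (hP.lt_of_ne_source hf huP huv) (hP.lt_of_ne_target hf huP huw)
  rcases hx with hxP | hxQ
  · exact hG.exists_isShortestPath_pair_of_detour hf hP hQ huP huQ hxP hy hxu huy hL hLy hLPQ
  · obtain ⟨P', Q', hP', hQ', h⟩ := hG.exists_isShortestPath_pair_of_detour hf hQ hP huQ huP hxQ
      hy.symm hxu huy hL hLy fun z hz hzQP => hLPQ z hz hzQP.symm
    exact ⟨P', Q', hP', hQ', fun z hzP' hzQ' => (h z hzP' hzQ').imp_right And.symm⟩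

end

/-- For any vertices `v, w` joined by at least one path,
there exist two shortest paths from `v` to `w` intersecting only at
`(v, w)`-distance-critical vertices (and the endpoints). -/
theorem exists_shortest_paths_meeting_only_in_critical
    (hG : NoNonposCycle E ℓ) (v w : V)
    (hreach : ∃ p : List V, IsPathFrom E p v w) :
    ∃ P Q : List V, IsShortestPath E ℓ P v w ∧ IsShortestPath E ℓ Q v w ∧
      ∀ u, u ∈ P → u ∈ Q → u ∈ Delta E ℓ v w := by
  obtain ⟨P₀, hP₀⟩ := exists_isShortestPath (ℓ := ℓ) hreach
  obtain ⟨⟨P, Q⟩, ⟨hP, hQ⟩, hmin⟩ :=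
    (measure fun q : List V × List V => (q.1.toFinset ∩ q.2.toFinset).card).wf.has_min
      {q | IsShortestPath E ℓ q.1 v w ∧ IsShortestPath E ℓ q.2 v w} ⟨(P₀, P₀), hP₀, hP₀⟩
  refine ⟨P, Q, hP, hQ, fun u huP huQ => by_contra fun hu => ?_⟩
  obtain ⟨P', Q', hP', hQ', hsub⟩ := hG.exists_isShortestPath_pair_inter_subset hP hQ huP huQ hu
  refine hmin (P', Q') ⟨hP', hQ'⟩ (Finset.card_lt_card ⟨fun z hz => ?_, fun h => ?_⟩)
  · simp only [Finset.mem_inter, List.mem_toFinset] at hz ⊢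
    exact (hsub z hz.1 hz.2).2
  · have hu' := h (by simp [huP, huQ] : u ∈ P.toFinset ∩ Q.toFinset)
    simp only [Finset.mem_inter, List.mem_toFinset] at hu'
    exact (hsub u hu'.1 hu'.2).1 rfl

end DSP
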